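/- Let b ∈ (0, 1/2], γ ∈ (0, 1), and let v : V → ℝ^d be an embedding with v_avg = Σ_{i∈V} μ_i v_i and r_i = ‖v_i − v_avg‖. Relabel the vertices so that r_1 ≥ r_2 ≥ … ≥ r_n, let S_j = {1,…,j}, and let z be the smallest index with μ(S_z) ≥ b/8. Let R = {i ∈ V : r_i² ≤ 32·(1−b)/b}. Suppose (1/m)·Σ_{{i,j}∈E} ‖v_i − v_j‖² ≤ 2γ, Σ_{i∈V} μ_i r_i² = 1, and Σ_{i∈R} Σ_{j∈R} μ_i μ_j ‖v_i − v_j‖² < μ(R)²/64. Then there exists h with 1 ≤ h < z such that φ(S_h) ≤ 2048·√γ and Σ_{i∈S_h} μ_i r_i² ≥ 1 − 3/64. -/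

import Mathlib

open Finset

/-- Number of edges of `G` with exactly one endpoint in `S` (each such edge counted once). -/
def cutSize {n : ℕ} (G : SimpleGraph (Fin n)) [DecidableRel G.Adj] (S : Finset (Fin n)) : ℕ :=
  ∑ i ∈ S, ∑ j ∈ Sᶜ, if G.Adj i j then 1 else 0

/-- Volume of a vertex subset: the sum of the degrees of its vertices. -/
def vol {n : ℕ} (G : SimpleGraph (Fin n)) [DecidableRel G.Adj] (S : Finset (Fin n)) : ℕ :=
  ∑ i ∈ S, G.degree i

/-- Conductance `φ(S) = |E(S,S̄)| / min(vol(S), vol(S̄))`. -/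
noncomputable def conductance {n : ℕ} (G : SimpleGraph (Fin n)) [DecidableRel G.Adj]
    (S : Finset (Fin n)) : ℝ :=
  (cutSize G S : ℝ) / min (vol G S : ℝ) (vol G Sᶜ : ℝ)

/-- Sum of a symmetric function over the edges `{i,j} ∈ E` of `G` (each edge counted once). -/
noncomputable def edgeSum {n : ℕ} (G : SimpleGraph (Fin n)) [DecidableRel G.Adj]
    (f : Fin n → Fin n → ℝ) : ℝ :=
  (∑ i, ∑ j, if G.Adj i j then f i j else 0) / 2

/-- Total `μ`-measure of a vertex subset, where `μ_i = d_i/(2m)`. -/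
noncomputable def μvol {n : ℕ} (G : SimpleGraph (Fin n)) [DecidableRel G.Adj]
    (m : ℕ) (S : Finset (Fin n)) : ℝ :=
  ∑ i ∈ S, (G.degree i : ℝ) / (2 * m)

/-- The sweep set consisting of the first `h` vertices (in the label order of `Fin n`).
With 1-based paper indexing, `sweep h` is the paper's sweep cut `S_h = {1, …, h}`. -/
def sweep (n h : ℕ) : Finset (Fin n) := Finset.univ.filter (fun i => (i : ℕ) < h)

/-!
Outside `R` every radius satisfies `r_i² > 32(1-b)/b ≥ 16/b`, so by Markov `μ(R̄) ≤ b/16`; since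
the radii are sorted, `R̄` is a prefix `S_k` of the radial order, and `k < z`. Measuring the pair
energy `P` of `R` from the global mean `v_avg` gives
`∑_R μ_i r_i² = P/(2μ(R)) + ‖∑_R μ_i (v_i - v_avg)‖²/μ(R)`, where `P < μ(R)²/64` by
non-roundability and the drift `∑_R μ_i (v_i - v_avg) = -∑_R̄ μ_i (v_i - v_avg)` is small by
Cauchy–Schwarz. Hence `S_k` carries variance at least `1 - 159/3968`.

Let `S_a` be the last prefix with variance below `1 - 3/64`, and weight the sweep cuts
`S_{t+1}`, `a ≤ t < z - 1`, by `r_t² - r_{t+1}²` (co-area). Since `r_{z-1}² ≤ 8/b ≤ r_i²/2` for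
`i < k`, the weighted volumes add up to at least `27m/3968`; the weighted cuts add up to at most
`2 ∑_{ij ∈ E} |r_i² - r_j²| ≤ 6√γ·m` by Cauchy–Schwarz against the edge energy. So some sweep
cut strictly after `S_a` has conductance below `2048√γ`.
-/

open scoped RealInnerProductSpace

theorem norm_sum_smul_sq {ι E : Type*} [NormedAddCommGroup E] [InnerProductSpace ℝ E]
    (s : Finset ι) (w : ι → ℝ) (y : ι → E) :
    ‖∑ i ∈ s, w i • y i‖ ^ 2 = ∑ i ∈ s, ∑ j ∈ s, w i * w j * ⟪y i, y j⟫ := by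
  simp_rw [← real_inner_self_eq_norm_sq, sum_inner, inner_sum, real_inner_smul_left,
    real_inner_smul_right, mul_assoc]

theorem sum_sum_mul_norm_sub_sq {ι E : Type*} [NormedAddCommGroup E] [InnerProductSpace ℝ E]
    (s : Finset ι) (w : ι → ℝ) (y : ι → E) :
    ∑ i ∈ s, ∑ j ∈ s, w i * w j * ‖y i - y j‖ ^ 2 =
      2 * (∑ i ∈ s, w i) * (∑ i ∈ s, w i * ‖y i‖ ^ 2) - 2 * ‖∑ i ∈ s, w i • y i‖ ^ 2 := by
  have hterm : ∀ i j, w i * w j * ‖y i - y j‖ ^ 2 = w j * (w i * ‖y i‖ ^ 2)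
      + w i * (w j * ‖y j‖ ^ 2) - 2 * (w i * w j * ⟪y i, y j⟫) := by
    intro i j; rw [norm_sub_sq_real]; ring
  simp only [hterm, sum_add_distrib, sum_sub_distrib, ← mul_sum, ← sum_mul, norm_sum_smul_sq]
  ring

theorem norm_sum_smul_sq_le {ι E : Type*} [NormedAddCommGroup E] [InnerProductSpace ℝ E]
    (s : Finset ι) {w : ι → ℝ} (hw : ∀ i ∈ s, 0 ≤ w i) (y : ι → E) :
    ‖∑ i ∈ s, w i • y i‖ ^ 2 ≤ (∑ i ∈ s, w i) * ∑ i ∈ s, w i * ‖y i‖ ^ 2 := by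
  calc ‖∑ i ∈ s, w i • y i‖ ^ 2 ≤ (∑ i ∈ s, w i * ‖y i‖) ^ 2 := by
        gcongr
        refine (norm_sum_le _ _).trans (le_of_eq (sum_congr rfl fun i hi => ?_))
        rw [norm_smul, Real.norm_of_nonneg (hw i hi)]
    _ ≤ _ := sum_sq_le_sum_mul_sum_of_sq_le_mul s hw
        (fun i hi => mul_nonneg (hw i hi) (sq_nonneg _)) fun i _ => le_of_eq (by ring)

theorem mul_sum_le_sum_mul_of_le {ι : Type*} {s : Finset ι} {w g : ι → ℝ} {c : ℝ}
    (hw : ∀ i ∈ s, 0 ≤ w i) (hg : ∀ i ∈ s, c ≤ g i) :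
    c * ∑ i ∈ s, w i ≤ ∑ i ∈ s, w i * g i := by
  rw [mul_sum]
  exact sum_le_sum fun i hi => by nlinarith [hw i hi, hg i hi]

theorem sum_mul_norm_sub_sq_le_of_not_roundable {ι E : Type*} [Fintype ι] [DecidableEq ι]
    [NormedAddCommGroup E] [InnerProductSpace ℝ E] {μ : ι → ℝ} (hμ0 : ∀ i, 0 ≤ μ i)
    (hμ1 : ∑ i, μ i = 1) (v : ι → E) (R : Finset ι)
    (hvar : ∑ i, μ i * ‖v i - ∑ j, μ j • v j‖ ^ 2 = 1) (hRc : ∑ i ∈ Rᶜ, μ i ≤ 1 / 32)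
    (hnot : ∑ i ∈ R, ∑ j ∈ R, μ i * μ j * ‖v i - v j‖ ^ 2 < (∑ i ∈ R, μ i) ^ 2 / 64) :
    ∑ i ∈ R, μ i * ‖v i - ∑ j, μ j • v j‖ ^ 2 ≤ 159 / 3968 := by
  set u := ∑ j, μ j • v j
  set a := ∑ i ∈ R, μ i
  have ha : 31 / 32 ≤ a ∧ a ≤ 1 := by
    have hsplit := sum_add_sum_compl R μ
    have hRc0 : 0 ≤ ∑ i ∈ Rᶜ, μ i := sum_nonneg fun i _ => hμ0 i
    constructor <;> linarith
  have hcentred : ∑ i ∈ R, μ i • (v i - u) = -∑ i ∈ Rᶜ, μ i • (v i - u) := by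
    rw [eq_neg_iff_add_eq_zero, sum_add_sum_compl]
    simp only [smul_sub, sum_sub_distrib, ← sum_smul, hμ1, one_smul, u, sub_self]
  have hvarRc : ∑ i ∈ Rᶜ, μ i * ‖v i - u‖ ^ 2 ≤ 1 :=
    hvar ▸ sum_le_sum_of_subset_of_nonneg (subset_univ _)
      fun i _ _ => mul_nonneg (hμ0 i) (sq_nonneg _)
  have hdrift : ‖∑ i ∈ R, μ i • (v i - u)‖ ^ 2 ≤ 1 / 32 := by
    rw [hcentred, norm_neg]
    calc _ ≤ (∑ i ∈ Rᶜ, μ i) * ∑ i ∈ Rᶜ, μ i * ‖v i - u‖ ^ 2 :=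
          norm_sum_smul_sq_le _ (fun i _ => hμ0 i) _
      _ ≤ 1 / 32 * 1 := mul_le_mul hRc hvarRc
          (sum_nonneg fun i _ => mul_nonneg (hμ0 i) (sq_nonneg _)) (by norm_num)
      _ = 1 / 32 := by norm_num
  have hpair := sum_sum_mul_norm_sub_sq R μ fun i => v i - u
  simp only [sub_sub_sub_cancel_right] at hpair
  have hkey : 2 * a * ∑ i ∈ R, μ i * ‖v i - u‖ ^ 2 < a ^ 2 / 64 + 1 / 16 := by
    linarith
  -- `a / 128 + 1 / (32 a)` is convex in `a` and at most `159/3968` at both ends of `[31/32, 1]`.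
  nlinarith [mul_nonneg (sub_nonneg.2 ha.1) (sub_nonneg.2 ha.2)]

section

variable {n : ℕ}

theorem exists_antitone_nat_extension {f : Fin n → ℝ} (hf : Antitone f) (hf0 : ∀ i, 0 ≤ f i) :
    ∃ g : ℕ → ℝ, Antitone g ∧ ∀ i : Fin n, g i = f i := by
  refine ⟨fun t => if ht : t < n then f ⟨t, ht⟩ else 0, fun s t hst => ?_, fun i => by simp⟩
  by_cases ht : t < n
  · simp only [ht, hst.trans_lt ht, dite_true]
    exact hf (Fin.mk_le_mk.2 hst)
  · simp only [ht, dite_false]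
    split_ifs
    exacts [hf0 _, le_rfl]

theorem sum_Ico_sub_succ (ρ : ℕ → ℝ) {a b : ℕ} (hab : a ≤ b) :
    ∑ t ∈ Ico a b, (ρ t - ρ (t + 1)) = ρ a - ρ b := by
  simpa only [neg_sub_neg] using sum_Ico_sub (fun t => -ρ t) hab

theorem sum_filter_sub_succ_le_abs {ρ : ℕ → ℝ} (hρ : Antitone ρ) (T : Finset ℕ) (i j : ℕ) :
    ∑ t ∈ T with i ≤ t ∧ t < j, (ρ t - ρ (t + 1)) ≤ |ρ i - ρ j| := by
  rcases le_total i j with hij | hji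
  · calc _ ≤ ∑ t ∈ Ico i j, (ρ t - ρ (t + 1)) :=
          sum_le_sum_of_subset_of_nonneg
            (fun t ht => by simp only [mem_filter, mem_Ico] at ht ⊢; omega)
            fun t _ _ => sub_nonneg.2 (hρ t.le_succ)
      _ = ρ i - ρ j := sum_Ico_sub_succ ρ hij
      _ ≤ _ := le_abs_self _
  · rw [filter_false_of_mem fun t _ => by omega, sum_empty]
    exact abs_nonneg _

@[simp] theorem mem_sweep {h : ℕ} {i : Fin n} : i ∈ sweep n h ↔ (i : ℕ) < h := by
  simp [sweep]

theorem sweep_mono {h h' : ℕ} (hh : h ≤ h') : sweep n h ⊆ sweep n h' := fun i hi => by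
  rw [mem_sweep] at hi ⊢; omega

theorem eq_sweep_card_of_isLowerSet {s : Finset (Fin n)} (hs : IsLowerSet (s : Set (Fin n))) :
    s = sweep n #s := by
  ext i
  rw [mem_sweep]
  constructor
  · intro hi
    have := card_le_card (show Iic i ⊆ s from fun j hj => hs (mem_Iic.1 hj) hi)
    rw [Fin.card_Iic] at this
    omega
  · intro hi
    by_contra hni
    have := card_le_card (show s ⊆ Iio i from
      fun j hj => mem_Iio.2 (lt_of_not_ge fun hij => hni (hs hij hj)))
    rw [Fin.card_Iio] at this
    omega

theorem mul_sum_sweep_le {ρ : ℕ → ℝ} (hρ : Antitone ρ) {μ : Fin n → ℝ} (hμ0 : ∀ i, 0 ≤ μ i)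
    (z : ℕ) : ρ (z - 1) * ∑ i ∈ sweep n z, μ i ≤ ∑ i ∈ sweep n z, μ i * ρ i :=
  mul_sum_le_sum_mul_of_le (fun i _ => hμ0 i) fun _ hi =>
    hρ (Nat.le_sub_one_of_lt (mem_sweep.1 hi))

variable (G : SimpleGraph (Fin n)) [DecidableRel G.Adj]

theorem edgeSum_mono {f g : Fin n → Fin n → ℝ} (h : ∀ i j, G.Adj i j → f i j ≤ g i j) :
    edgeSum G f ≤ edgeSum G g := by
  unfold edgeSum
  gcongr with i _ j _
  split_ifs with hij
  exacts [h i j hij, le_rfl]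

theorem edgeSum_nonneg {f : Fin n → Fin n → ℝ} (h : ∀ i j, G.Adj i j → 0 ≤ f i j) :
    0 ≤ edgeSum G f := by
  simpa [edgeSum] using edgeSum_mono G (f := fun _ _ => 0) h

theorem edgeSum_add_eq_sum_degree_mul (f : Fin n → ℝ) :
    edgeSum G (fun i j => f i + f j) = ∑ i, (G.degree i : ℝ) * f i := by
  have hdeg : ∀ i, ∑ j, (if G.Adj i j then f i else 0) = G.degree i * f i := by
    intro i
    rw [← sum_filter, sum_const, nsmul_eq_mul, ← SimpleGraph.neighborFinset_eq_filter,
      SimpleGraph.card_neighborFinset_eq_degree]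
  have hswap : ∑ i, ∑ j, (if G.Adj i j then f j else 0)
      = ∑ i, ∑ j, (if G.Adj i j then f i else 0) := by
    rw [sum_comm]
    simp only [G.adj_comm]
  unfold edgeSum
  simp only [ite_add_zero, sum_add_distrib, hswap, hdeg]
  ring

theorem edgeSum_mul_sq_le (f g : Fin n → Fin n → ℝ) :
    edgeSum G (fun i j => f i j * g i j) ^ 2
      ≤ edgeSum G (fun i j => f i j ^ 2) * edgeSum G (fun i j => g i j ^ 2) := by
  have hcs := sum_mul_sq_le_sq_mul_sq (univ ×ˢ univ)
    (fun p : Fin n × Fin n => if G.Adj p.1 p.2 then f p.1 p.2 else 0)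
    (fun p => if G.Adj p.1 p.2 then g p.1 p.2 else 0)
  simp only [sum_product, ite_zero_mul_ite_zero, and_self, ite_pow, ne_eq,
    OfNat.ofNat_ne_zero, not_false_eq_true, zero_pow] at hcs
  unfold edgeSum
  linarith

theorem edgeSum_abs_sq_sub_sq_sq_le {r : Fin n → ℝ} (hr : ∀ i, 0 ≤ r i) :
    edgeSum G (fun i j => |r i ^ 2 - r j ^ 2|) ^ 2
      ≤ 2 * edgeSum G (fun i j => (r i - r j) ^ 2) * ∑ i, (G.degree i : ℝ) * r i ^ 2 := by
  have hfactor : ∀ i j, |r i ^ 2 - r j ^ 2| = |r i - r j| * (r i + r j) := fun i j => by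
    rw [sq_sub_sq, abs_mul, abs_of_nonneg (add_nonneg (hr i) (hr j)), mul_comm]
  have hsum : edgeSum G (fun i j => (r i + r j) ^ 2) ≤ 2 * ∑ i, (G.degree i : ℝ) * r i ^ 2 :=
    calc _ ≤ edgeSum G (fun i j => 2 * r i ^ 2 + 2 * r j ^ 2) :=
          edgeSum_mono G fun i j _ => by nlinarith [sq_nonneg (r i - r j)]
      _ = _ := by
          rw [edgeSum_add_eq_sum_degree_mul, mul_sum]
          exact sum_congr rfl fun i _ => by ring
  have hdiff : 0 ≤ edgeSum G (fun i j => (r i - r j) ^ 2) :=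
    edgeSum_nonneg G fun i j _ => sq_nonneg _
  simp only [hfactor]
  calc _ ≤ edgeSum G (fun i j => |r i - r j| ^ 2) * edgeSum G (fun i j => (r i + r j) ^ 2) :=
        edgeSum_mul_sq_le G _ _
    _ ≤ _ := by
        simp only [sq_abs]
        nlinarith

theorem edgeSum_abs_sq_sub_sq_le {r : Fin n → ℝ} (hr : ∀ i, 0 ≤ r i) {γ m : ℝ} (hγ : 0 ≤ γ)
    (hm : 0 ≤ m) (hE : edgeSum G (fun i j => (r i - r j) ^ 2) ≤ 2 * γ * m)
    (hV : ∑ i, (G.degree i : ℝ) * r i ^ 2 = 2 * m) :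
    edgeSum G (fun i j => |r i ^ 2 - r j ^ 2|) ≤ 3 * √γ * m := by
  have h := edgeSum_abs_sq_sub_sq_sq_le G hr
  rw [hV] at h
  have hsq : edgeSum G (fun i j => |r i ^ 2 - r j ^ 2|) ^ 2 ≤ (3 * √γ * m) ^ 2 := by
    rw [mul_pow, mul_pow, Real.sq_sqrt hγ]
    nlinarith
  exact le_of_pow_le_pow_left₀ two_ne_zero (by positivity) hsq

theorem edgeSum_sq_sub_norm_sub_le {E : Type*} [SeminormedAddCommGroup E] (x : Fin n → E)
    (u : E) : edgeSum G (fun i j => (‖x i - u‖ - ‖x j - u‖) ^ 2)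
      ≤ edgeSum G (fun i j => ‖x i - x j‖ ^ 2) :=
  edgeSum_mono G fun i j _ => by
    rw [← sq_abs]
    gcongr
    simpa using abs_norm_sub_norm_le (x i - u) (x j - u)

theorem sum_eq_one_of_eq_degree_div {m : ℕ} (hm : m = #G.edgeFinset) (hm0 : m ≠ 0)
    {μ : Fin n → ℝ} (hμ : ∀ i, μ i = (G.degree i : ℝ) / (2 * m)) : ∑ i, μ i = 1 := by
  simp only [hμ, ← sum_div, ← Nat.cast_sum, G.sum_degrees_eq_twice_card_edges, ← hm]
  push_cast
  field_simp

theorem μvol_eq_sum {m : ℕ} {μ : Fin n → ℝ} (hμ : ∀ i, μ i = (G.degree i : ℝ) / (2 * m))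
    (S : Finset (Fin n)) : μvol G m S = ∑ i ∈ S, μ i := by
  simp [μvol, hμ]

theorem vol_add_vol_compl (S : Finset (Fin n)) : vol G S + vol G Sᶜ = 2 * #G.edgeFinset := by
  rw [vol, vol, sum_add_sum_compl, G.sum_degrees_eq_twice_card_edges]

theorem vol_le_vol_compl {m : ℕ} (hm : m = #G.edgeFinset) (hm0 : m ≠ 0) {μ : Fin n → ℝ}
    (hμ : ∀ i, μ i = (G.degree i : ℝ) / (2 * m)) {S : Finset (Fin n)}
    (hS : ∑ i ∈ S, μ i ≤ 1 / 2) : vol G S ≤ vol G Sᶜ := by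
  have hvol : (vol G S : ℝ) = 2 * m * ∑ i ∈ S, μ i := by
    simp only [vol, hμ, Nat.cast_sum, mul_sum]
    exact sum_congr rfl fun i _ => by field_simp
  have hsum : (vol G S : ℝ) + vol G Sᶜ = 2 * m := by
    exact_mod_cast hm ▸ vol_add_vol_compl G S
  have hm0' : (0 : ℝ) < m := Nat.cast_pos.2 (Nat.pos_of_ne_zero hm0)
  have : (vol G S : ℝ) ≤ vol G Sᶜ := by nlinarith
  exact_mod_cast this

theorem sum_cutSize_sweep_mul_le {ρ : ℕ → ℝ} (hρ : Antitone ρ) (T : Finset ℕ) :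
    ∑ t ∈ T, (cutSize G (sweep n (t + 1)) : ℝ) * (ρ t - ρ (t + 1))
      ≤ 2 * edgeSum G (fun i j => |ρ i - ρ j|) := by
  have hcut : ∀ t, (cutSize G (sweep n (t + 1)) : ℝ) * (ρ t - ρ (t + 1)) = ∑ i, ∑ j,
      if G.Adj i j then (if (i : ℕ) ≤ t ∧ t < j then ρ t - ρ (t + 1) else 0) else 0 := by
    intro t
    simp only [cutSize, sweep, compl_filter, sum_filter]
    push_cast
    rw [sum_mul]
    refine sum_congr rfl fun i _ => ?_
    rw [ite_mul, zero_mul, sum_mul]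
    split_ifs with hi
    · refine sum_congr rfl fun j _ => ?_
      by_cases hj : (j : ℕ) < t + 1 <;> by_cases hij : G.Adj i j <;> simp [hj, hij] <;> omega
    · refine (sum_eq_zero fun j _ => ?_).symm
      split_ifs <;> first | rfl | omega
  simp only [hcut]
  rw [sum_comm]
  unfold edgeSum
  rw [mul_div_cancel₀ _ two_ne_zero]
  refine sum_le_sum fun i _ => ?_
  rw [sum_comm]
  refine sum_le_sum fun j _ => ?_
  split_ifs
  · rw [← sum_filter]
    exact sum_filter_sub_succ_le_abs hρ T i j
  · simp

theorem sum_degree_mul_sub_le_sum_vol_sweep_mul {ρ : ℕ → ℝ} (hρ : Antitone ρ) {a b : ℕ}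
    (U : Finset (Fin n)) (hU : ∀ i ∈ U, a ≤ (i : ℕ) ∧ (i : ℕ) < b) :
    ∑ i ∈ U, (G.degree i : ℝ) * (ρ i - ρ b)
      ≤ ∑ t ∈ Ico a b, (vol G (sweep n (t + 1)) : ℝ) * (ρ t - ρ (t + 1)) := by
  have hvol : ∀ t, (vol G (sweep n (t + 1)) : ℝ) * (ρ t - ρ (t + 1))
      = ∑ i : Fin n, if (i : ℕ) ≤ t then (G.degree i : ℝ) * (ρ t - ρ (t + 1)) else 0 := by
    intro t
    simp only [vol, sweep, sum_filter, Nat.lt_succ_iff]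
    push_cast
    rw [sum_mul]
    exact sum_congr rfl fun i _ => by split_ifs <;> simp
  simp only [hvol]
  rw [sum_comm]
  calc ∑ i ∈ U, (G.degree i : ℝ) * (ρ i - ρ b)
      = ∑ i ∈ U, ∑ t ∈ Ico a b,
          if (i : ℕ) ≤ t then (G.degree i : ℝ) * (ρ t - ρ (t + 1)) else 0 := by
        refine sum_congr rfl fun i hi => ?_
        have hIco : (Ico a b).filter (fun t => (i : ℕ) ≤ t) = Ico (i : ℕ) b := by
          ext t
          simp only [mem_filter, mem_Ico]
          have := hU i hi
          omega
        rw [← sum_filter, hIco, ← mul_sum, sum_Ico_sub_succ ρ (hU i hi).2.le]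
    _ ≤ _ := sum_le_sum_of_subset_of_nonneg (subset_univ U) fun i _ _ =>
        sum_nonneg fun t _ => by
          split_ifs
          exacts [mul_nonneg (Nat.cast_nonneg _) (sub_nonneg.2 (hρ t.le_succ)), le_rfl]

theorem exists_conductance_sweep_lt {ρ : ℕ → ℝ} (hρ : Antitone ρ) (T : Finset ℕ) {φ : ℝ}
    (hvol : ∀ t ∈ T, vol G (sweep n (t + 1)) ≤ vol G (sweep n (t + 1))ᶜ)
    (hlt : 2 * edgeSum G (fun i j => |ρ i - ρ j|)
      < φ * ∑ t ∈ T, (vol G (sweep n (t + 1)) : ℝ) * (ρ t - ρ (t + 1))) :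
    ∃ t ∈ T, conductance G (sweep n (t + 1)) < φ := by
  rw [mul_sum] at hlt
  obtain ⟨t, ht, hcut⟩ := exists_lt_of_sum_lt ((sum_cutSize_sweep_mul_le G hρ T).trans_lt hlt)
  rw [← mul_assoc] at hcut
  have hcut' := lt_of_mul_lt_mul_right hcut (sub_nonneg.2 (hρ t.le_succ))
  have hvol0 : (0 : ℝ) < vol G (sweep n (t + 1)) := by
    by_contra! h0
    have : (vol G (sweep n (t + 1)) : ℝ) = 0 := le_antisymm h0 (Nat.cast_nonneg _)
    rw [this, mul_zero] at hcut'
    exact (Nat.cast_nonneg _).not_gt hcut'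
  refine ⟨t, ht, ?_⟩
  rw [conductance, min_eq_left (by exact_mod_cast hvol t ht), div_lt_iff₀ hvol0]
  exact hcut'

end

theorem exists_sweep_of_not_roundable {n : ℕ} {E : Type*} [NormedAddCommGroup E]
    [InnerProductSpace ℝ E] {μ : Fin n → ℝ} (hμ0 : ∀ i, 0 ≤ μ i) (hμ1 : ∑ i, μ i = 1)
    (v : Fin n → E) {r : Fin n → ℝ} (hr : ∀ i, r i = ‖v i - ∑ j, μ j • v j‖)
    (hsorted : Antitone r) {b : ℝ} (hb0 : 0 < b) (hb2 : b ≤ 1 / 2) {z : ℕ}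
    (hz : b / 8 ≤ ∑ i ∈ sweep n z, μ i) (R : Finset (Fin n))
    (hR : R = univ.filter (fun i => r i ^ 2 ≤ 32 * (1 - b) / b))
    (hvar : ∑ i, μ i * r i ^ 2 = 1)
    (hnot : ∑ i ∈ R, ∑ j ∈ R, μ i * μ j * ‖v i - v j‖ ^ 2 < (∑ i ∈ R, μ i) ^ 2 / 64) :
    ∃ k < z, (∀ i : Fin n, (i : ℕ) < k → 16 / b ≤ r i ^ 2) ∧
      1 - 159 / 3968 ≤ ∑ i ∈ sweep n k, μ i * r i ^ 2 := by
  have hr0 : ∀ i, 0 ≤ r i := fun i => hr i ▸ norm_nonneg _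
  have hfar : ∀ i ∈ Rᶜ, 16 / b ≤ r i ^ 2 := fun i hi => by
    have : 16 / b ≤ 32 * (1 - b) / b := by gcongr; linarith
    simp only [hR, mem_compl, mem_filter, mem_univ, true_and, not_le] at hi
    linarith
  have hRc : Rᶜ = sweep n #Rᶜ := eq_sweep_card_of_isLowerSet fun i j hji hi => by
    simp only [hR, coe_compl, coe_filter, mem_univ, true_and, Set.mem_compl_iff,
      Set.mem_ofPred_eq, not_le] at hi ⊢
    nlinarith [hsorted hji, hr0 i, hr0 j]
  have hmass : ∑ i ∈ Rᶜ, μ i ≤ b / 16 := by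
    have h := (mul_sum_le_sum_mul_of_le (fun i _ => hμ0 i) hfar).trans
      (hvar ▸ sum_le_sum_of_subset_of_nonneg (subset_univ Rᶜ)
        fun i _ _ => mul_nonneg (hμ0 i) (sq_nonneg (r i)))
    rw [div_mul_eq_mul_div, div_le_one hb0] at h
    linarith
  have hconc := sum_mul_norm_sub_sq_le_of_not_roundable hμ0 hμ1 v R
    (by simpa only [hr] using hvar) (by linarith) hnot
  refine ⟨#Rᶜ, ?_, fun i hi => hfar i (by rw [hRc, mem_sweep]; exact hi), ?_⟩
  · by_contra! hzk
    have := sum_le_sum_of_subset_of_nonneg (s := sweep n z) (t := Rᶜ)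
      (by rw [hRc]; exact sweep_mono hzk) fun i _ _ => hμ0 i
    linarith
  · rw [← hRc]
    have := sum_add_sum_compl R fun i => μ i * r i ^ 2
    simp only [hr] at this hvar ⊢
    linarith

theorem exists_sweep_conductance_le {n : ℕ} (G : SimpleGraph (Fin n)) [DecidableRel G.Adj]
    {m : ℕ} (hm : m = #G.edgeFinset) (hm1 : 1 ≤ m) {μ : Fin n → ℝ}
    (hμ : ∀ i, μ i = (G.degree i : ℝ) / (2 * m)) {b γ : ℝ} (hb0 : 0 < b) (hb2 : b ≤ 1 / 2)
    (hγ0 : 0 < γ) {r : Fin n → ℝ} (hr0 : ∀ i, 0 ≤ r i) (hsorted : Antitone r)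
    (hE : edgeSum G (fun i j => (r i - r j) ^ 2) ≤ 2 * γ * m) (hvar : ∑ i, μ i * r i ^ 2 = 1)
    {a k z : ℕ} (hak : a ≤ k) (hkz : k < z) (hfar : ∀ i : Fin n, (i : ℕ) < k → 16 / b ≤ r i ^ 2)
    (hk : 1 - 159 / 3968 ≤ ∑ i ∈ sweep n k, μ i * r i ^ 2)
    (ha : ∑ i ∈ sweep n a, μ i * r i ^ 2 < 1 - 3 / 64)
    (hz : b / 8 ≤ ∑ i ∈ sweep n z, μ i) (hzmin : ∀ h < z, ∑ i ∈ sweep n h, μ i < b / 8) :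
    ∃ h, a < h ∧ h < z ∧ conductance G (sweep n h) ≤ 2048 * √γ := by
  have hm0 : (0 : ℝ) < m := by exact_mod_cast hm1
  have hμ0 : ∀ i, 0 ≤ μ i := fun i => hμ i ▸ by positivity
  have hdeg : ∀ i, (G.degree i : ℝ) = 2 * m * μ i := fun i => by rw [hμ]; field_simp
  obtain ⟨ρ, hρ, hρr⟩ := exists_antitone_nat_extension (f := fun i => r i ^ 2)
    (fun i j hij => pow_le_pow_left₀ (hr0 j) (hsorted hij) 2) fun i => sq_nonneg (r i)
  have hρ0 : ∀ i : Fin n, 0 ≤ ρ i := fun i => hρr i ▸ sq_nonneg (r i)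
  have hρz : ρ (z - 1) ≤ 8 / b := by
    have h := (mul_sum_sweep_le hρ hμ0 z).trans
      (sum_le_sum_of_subset_of_nonneg (subset_univ _) fun i _ _ => mul_nonneg (hμ0 i) (hρ0 i))
    simp only [hρr, hvar] at h
    rw [le_div_iff₀ hb0]
    nlinarith
  have hU : ∀ i ∈ sweep n k \ sweep n a, a ≤ (i : ℕ) ∧ (i : ℕ) < z - 1 := fun i hi => by
    simp only [mem_sdiff, mem_sweep] at hi
    omega
  have hlow : 27 / 3968 * m
      ≤ ∑ t ∈ Ico a (z - 1), (vol G (sweep n (t + 1)) : ℝ) * (ρ t - ρ (t + 1)) :=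
    calc 27 / 3968 * m ≤ m * ∑ i ∈ sweep n k \ sweep n a, μ i * r i ^ 2 := by
          rw [sum_sdiff_eq_sub (sweep_mono hak)]
          nlinarith
      _ = ∑ i ∈ sweep n k \ sweep n a, (G.degree i : ℝ) * (r i ^ 2 / 2) := by
          rw [mul_sum]
          exact sum_congr rfl fun i _ => by rw [hdeg]; ring
      _ ≤ ∑ i ∈ sweep n k \ sweep n a, (G.degree i : ℝ) * (ρ i - ρ (z - 1)) :=
          sum_le_sum fun i hi => by
            have := hfar i (mem_sweep.1 (mem_sdiff.1 hi).1)
            rw [hρr]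
            gcongr
            linarith [show 16 / b / 2 = 8 / b by ring]
      _ ≤ _ := sum_degree_mul_sub_le_sum_vol_sweep_mul G hρ _ hU
  have hup : edgeSum G (fun i j => |ρ i - ρ j|) ≤ 3 * √γ * m := by
    simp only [hρr]
    refine edgeSum_abs_sq_sub_sq_le G hr0 hγ0.le hm0.le hE ?_
    simp only [hdeg, mul_assoc, ← mul_sum, hvar, mul_one]
  have hvol : ∀ t ∈ Ico a (z - 1), vol G (sweep n (t + 1)) ≤ vol G (sweep n (t + 1))ᶜ :=
    fun t ht => vol_le_vol_compl G hm (by omega) hμ (by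
      have := hzmin (t + 1) (by simp only [mem_Ico] at ht; omega)
      linarith)
  have hγm : 0 < √γ * m := mul_pos (Real.sqrt_pos.2 hγ0) hm0
  obtain ⟨t, ht, hφ⟩ := exists_conductance_sweep_lt G hρ _ (φ := 2048 * √γ) hvol (by
    nlinarith [mul_le_mul_of_nonneg_left hlow (by positivity : (0 : ℝ) ≤ 2048 * √γ)])
  simp only [mem_Ico] at ht
  exact ⟨t + 1, by omega, by omega, hφ.le⟩

theorem oracle_case_three_general {n : ℕ}
    (G : SimpleGraph (Fin n)) [DecidableRel G.Adj]
    (m : ℕ) (hm : m = G.edgeFinset.card) (hm1 : 1 ≤ m)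
    (μ : Fin n → ℝ) (hμ : ∀ i, μ i = (G.degree i : ℝ) / (2 * m))
    (b γ : ℝ) (hb0 : 0 < b) (hb2 : b ≤ 1 / 2) (hγ0 : 0 < γ)
    {d : ℕ} (v : Fin n → EuclideanSpace ℝ (Fin d))
    (r : Fin n → ℝ) (hr : ∀ i, r i = ‖v i - ∑ j, μ j • v j‖)
    (hsorted : ∀ i j : Fin n, i ≤ j → r j ≤ r i)
    (z : ℕ)
    (hz : b / 8 ≤ μvol G m (sweep n z))
    (hzmin : ∀ h : ℕ, h < z → μvol G m (sweep n h) < b / 8)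
    (R : Finset (Fin n))
    (hR : R = Finset.univ.filter (fun i => r i ^ 2 ≤ 32 * (1 - b) / b))
    (henergy : (1 / (m : ℝ)) * edgeSum G (fun i j => ‖v i - v j‖ ^ 2) ≤ 2 * γ)
    (hvar : ∑ i, μ i * r i ^ 2 = 1)
    (hnotround : ∑ i ∈ R, ∑ j ∈ R, μ i * μ j * ‖v i - v j‖ ^ 2 < μvol G m R ^ 2 / 64) :
    ∃ h : ℕ, 1 ≤ h ∧ h < z ∧
      conductance G (sweep n h) ≤ 2048 * Real.sqrt γ ∧
      1 - 3 / 64 ≤ ∑ i ∈ sweep n h, μ i * r i ^ 2 := by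
  have hm0 : (0 : ℝ) < m := by exact_mod_cast hm1
  have hμ0 : ∀ i, 0 ≤ μ i := fun i => hμ i ▸ by positivity
  have hμ1 := sum_eq_one_of_eq_degree_div G hm (by omega) hμ
  simp only [μvol_eq_sum G hμ] at hz hzmin hnotround
  have hE : edgeSum G (fun i j => (r i - r j) ^ 2) ≤ 2 * γ * m := by
    simp only [hr]
    refine (edgeSum_sq_sub_norm_sub_le G v _).trans ?_
    rw [one_div, inv_mul_le_iff₀ hm0] at henergy
    linarith
  obtain ⟨k, hkz, hfar, hk⟩ :=
    exists_sweep_of_not_roundable hμ0 hμ1 v hr hsorted hb0 hb2 hz R hR hvar hnotround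
  have hex : ∃ h, 1 - 3 / 64 ≤ ∑ i ∈ sweep n h, μ i * r i ^ 2 := ⟨k, by linarith⟩
  have hfind0 : 0 < Nat.find hex := (Nat.find_pos hex).2 (by norm_num [sweep])
  have hfindk : Nat.find hex ≤ k := Nat.find_min' hex (by linarith)
  obtain ⟨h, hah, hhz, hφ⟩ := exists_sweep_conductance_le (a := Nat.find hex - 1) G hm hm1 hμ
    hb0 hb2 hγ0 (fun i => hr i ▸ norm_nonneg _) hsorted hE hvar (by omega) hkz hfar hk
    (not_le.1 (Nat.find_min hex (Nat.sub_one_lt hfind0.ne'))) hz hzmin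
  refine ⟨h, by omega, hhz, hφ, (Nat.find_spec hex).trans ?_⟩
  exact sum_le_sum_of_subset_of_nonneg (sweep_mono (by omega))
    fun i _ _ => mul_nonneg (hμ0 i) (sq_nonneg _)

/-- **Case 3 of the proof of Theorem 2.5 (the Oracle).** The vertices are relabeled so
that the radii `r_i = ‖v_i − v_avg‖` are nonincreasing, `z` is the smallest index with
`μ(S_z) ≥ b/8`, and `R = {i : r_i² ≤ 32(1−b)/b}`. If the embedding has edge energy
`(1/m)·∑_{{i,j}∈E}‖v_i − v_j‖² ≤ 2γ`, total variance `∑ μ_i r_i² = 1`, and is not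
roundable in the sense that `∑_{i,j∈R} μ_iμ_j‖v_i − v_j‖² < μ(R)²/64`, then some radial
sweep cut `S_h` with `1 ≤ h < z` has conductance at most `2048·√γ` and captures almost
all the variance: `∑_{i∈S_h} μ_i r_i² ≥ 1 − 3/64`. -/
theorem oracle_case_three {n : ℕ}
    (G : SimpleGraph (Fin n)) [DecidableRel G.Adj]
    (m : ℕ) (hm : m = G.edgeFinset.card) (hm1 : 1 ≤ m)
    (hdeg : ∀ i, 0 < G.degree i)
    (μ : Fin n → ℝ) (hμ : ∀ i, μ i = (G.degree i : ℝ) / (2 * m))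
    (b γ : ℝ) (hb0 : 0 < b) (hb2 : b ≤ 1 / 2) (hγ0 : 0 < γ) (hγ1 : γ < 1)
    {d : ℕ} (v : Fin n → EuclideanSpace ℝ (Fin d))
    (r : Fin n → ℝ) (hr : ∀ i, r i = ‖v i - ∑ j, μ j • v j‖)
    (hsorted : ∀ i j : Fin n, i ≤ j → r j ≤ r i)
    (z : ℕ)
    (hz : b / 8 ≤ μvol G m (sweep n z))
    (hzmin : ∀ h : ℕ, h < z → μvol G m (sweep n h) < b / 8)
    (R : Finset (Fin n))
    (hR : R = Finset.univ.filter (fun i => r i ^ 2 ≤ 32 * (1 - b) / b))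
    (henergy : (1 / (m : ℝ)) * edgeSum G (fun i j => ‖v i - v j‖ ^ 2) ≤ 2 * γ)
    (hvar : ∑ i, μ i * r i ^ 2 = 1)
    (hnotround : ∑ i ∈ R, ∑ j ∈ R, μ i * μ j * ‖v i - v j‖ ^ 2 < μvol G m R ^ 2 / 64) :
    ∃ h : ℕ, 1 ≤ h ∧ h < z ∧
      conductance G (sweep n h) ≤ 2048 * Real.sqrt γ ∧
      1 - 3 / 64 ≤ ∑ i ∈ sweep n h, μ i * r i ^ 2 :=
  oracle_case_three_general G m hm hm1 μ hμ b γ hb0 hb2 hγ0 v r hr hsorted z hz hzmin R hR henergy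
    hvar hnotround
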